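/- Let ⟨T, Σ, C₁ ⊑ C₂⟩ with Σ = N_C be an EL TBox abduction problem with T in normal form and ⊤-free, and Φ its first-order translation. Then PI^{g+}_{N_C}(Φ), viewed as a Herbrand interpretation, is a model of Φ, and PI^{g+}_{N_C}(Φ) ⊆ I for every Herbrand model I of Φ. -/
import Mathlib


namespace ELAbd

/-! ### EL concepts, TBoxes, semantics -/

inductive ELConcept : Type where
  | top : ELConcept
  | atom : ℕ → ELConcept
  | conj : ELConcept → ELConcept → ELConcept
  | ex : ℕ → ELConcept → ELConcept
deriving DecidableEq

abbrev CI := ELConcept × ELConcept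
abbrev TBox := Finset CI

structure Interp (α : Type) where
  conc : ℕ → Set α
  role : ℕ → Set (α × α)

def ELConcept.sem {α : Type} (I : Interp α) : ELConcept → Set α
  | .top => Set.univ
  | .atom A => I.conc A
  | .conj C D => C.sem I ∩ D.sem I
  | .ex r C => {d | ∃ e, (d, e) ∈ I.role r ∧ e ∈ C.sem I}

def Models {α : Type} (I : Interp α) (T : TBox) : Prop :=
  ∀ ci ∈ T, ci.1.sem I ⊆ ci.2.sem I

def Entails (T : TBox) (C D : ELConcept) : Prop :=
  ∀ (α : Type) (I : Interp α), Models I T → C.sem I ⊆ D.sem I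

def EntailsCI (T : TBox) (ci : CI) : Prop := Entails T ci.1 ci.2

def TEntails (T T' : TBox) : Prop :=
  ∀ (α : Type) (I : Interp α), Models I T → Models I T'

def TEquiv (T T' : TBox) : Prop := TEntails T T' ∧ TEntails T' T

/-- Equality of concepts modulo the convention that conjunctions are read as
sets (associativity, commutativity, idempotence, `⊤` as empty conjunction). -/
inductive CEq : ELConcept → ELConcept → Prop
  | refl (C) : CEq C C
  | symm {C D} : CEq C D → CEq D C
  | trans {C D E} : CEq C D → CEq D E → CEq C E
  | congr_conj {C C' D D'} : CEq C C' → CEq D D' → CEq (.conj C D) (.conj C' D')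
  | congr_ex {r C C'} : CEq C C' → CEq (.ex r C) (.ex r C')
  | comm (C D) : CEq (.conj C D) (.conj D C)
  | assoc (C D E) : CEq (.conj (.conj C D) E) (.conj C (.conj D E))
  | idem (C) : CEq (.conj C C) C
  | top_unit (C) : CEq (.conj .top C) C

/-- The relation `≼⊓` on concepts. -/
inductive PrecSq : ELConcept → ELConcept → Prop
  | refl (C) : PrecSq C C
  | conjL {C D'} (D'') : PrecSq C D' → PrecSq C (.conj D' D'')
  | ex (r) {C' D'} : PrecSq C' D' → PrecSq (.ex r C') (.ex r D')

def ELConcept.concNames : ELConcept → Set ℕ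
  | .top => ∅
  | .atom A => {A}
  | .conj C D => C.concNames ∪ D.concNames
  | .ex _ C => C.concNames

def ELConcept.roleNames : ELConcept → Set ℕ
  | .top => ∅
  | .atom _ => ∅
  | .conj C D => C.roleNames ∪ D.roleNames
  | .ex r C => {r} ∪ C.roleNames

def ELConcept.size : ELConcept → ℕ
  | .top => 1
  | .atom _ => 1
  | .conj C D => C.size + D.size + 1
  | .ex _ C => C.size + 1

def ELConcept.exCount : ELConcept → ℕ
  | .top => 0
  | .atom _ => 0
  | .conj C D => C.exCount + D.exCount
  | .ex _ C => C.exCount + 1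

def tboxSize (T : TBox) : ℕ := T.sum (fun ci => ci.1.size + ci.2.size)

def tboxConcNames (T : TBox) : Set ℕ :=
  {A | ∃ ci ∈ T, A ∈ ci.1.concNames ∪ ci.2.concNames}

def tboxRoleNames (T : TBox) : Set ℕ :=
  {r | ∃ ci ∈ T, r ∈ ci.1.roleNames ∪ ci.2.roleNames}

/-- Normal form (simultaneously `⊤`-free): every CI has one of the four shapes
`A ⊑ B`, `A₁ ⊓ A₂ ⊑ B`, `∃r.A ⊑ B`, `A ⊑ ∃r.B` with atomic concepts. -/
def NFci (ci : CI) : Prop :=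
  (∃ A B, ci = (ELConcept.atom A, ELConcept.atom B)) ∨
  (∃ A₁ A₂ B, ci = (ELConcept.conj (.atom A₁) (.atom A₂), ELConcept.atom B)) ∨
  (∃ r A B, ci = (ELConcept.ex r (.atom A), ELConcept.atom B)) ∨
  (∃ A r B, ci = (ELConcept.atom A, ELConcept.ex r (.atom B)))

def NormalForm (T : TBox) : Prop := ∀ ci ∈ T, NFci ci

/-- Normal form where the components may also be `⊤`. -/
def AtomTop (C : ELConcept) : Prop := C = .top ∨ ∃ A, C = ELConcept.atom A

def NFciTop (ci : CI) : Prop :=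
  (AtomTop ci.1 ∧ AtomTop ci.2) ∨
  (∃ A₁ A₂, ci.1 = ELConcept.conj A₁ A₂ ∧ AtomTop A₁ ∧ AtomTop A₂ ∧ AtomTop ci.2) ∨
  (∃ r A, ci.1 = ELConcept.ex r A ∧ AtomTop A ∧ AtomTop ci.2) ∨
  (∃ r B, ci.2 = ELConcept.ex r B ∧ AtomTop B ∧ AtomTop ci.1)

def NormalFormTop (T : TBox) : Prop := ∀ ci ∈ T, NFciTop ci

/-! ### EL description trees -/

noncomputable def conjOf (s : Finset ℕ) : ELConcept :=
  (s.toList.map ELConcept.atom).foldr ELConcept.conj ELConcept.top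

structure DescTree where
  V : Finset ℕ
  root : ℕ
  E : Finset (ℕ × ℕ × ℕ)      -- (v, r, w) : edge from v to w labeled r
  label : ℕ → Finset ℕ
  dep : ℕ → ℕ
  root_mem : root ∈ V
  edge_mem : ∀ e ∈ E, e.1 ∈ V ∧ e.2.2 ∈ V
  parent_unique : ∀ e ∈ E, ∀ e' ∈ E, e.2.2 = e'.2.2 → e = e'
  parent_exists : ∀ v ∈ V, v ≠ root → ∃ e ∈ E, e.2.2 = v
  dep_root : dep root = 0
  dep_edge : ∀ e ∈ E, dep e.2.2 = dep e.1 + 1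

noncomputable def DescTree.conceptAt (t : DescTree) : ℕ → ℕ → ELConcept
  | 0, v => conjOf (t.label v)
  | n + 1, v =>
      ((t.label v).toList.map ELConcept.atom ++
        (t.E.filter (fun e => e.1 = v)).toList.map
          (fun e => ELConcept.ex e.2.1 (t.conceptAt n e.2.2))).foldr ELConcept.conj ELConcept.top

/-- The concept `C_𝔗` represented by a description tree. -/
noncomputable def DescTree.concept (t : DescTree) : ELConcept := t.conceptAt t.V.card t.root

/-- `t` is a description tree for the concept `D` (concept equality is taken modulo
the conjunctions-as-sets convention). -/
def Represents (t : DescTree) (D : ELConcept) : Prop := CEq t.concept D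

/-- Weak homomorphism from `src` to `tgt`. -/
def WeakHom (src tgt : DescTree) (φ : ℕ → ℕ) : Prop :=
  φ src.root = tgt.root ∧ ∀ e ∈ src.E, (φ e.1, e.2.1, φ e.2.2) ∈ tgt.E

/-- `T`-homomorphism from `src` to `tgt`. -/
def THom (T : TBox) (src tgt : DescTree) (φ : ℕ → ℕ) : Prop :=
  WeakHom src tgt φ ∧
  ∀ w ∈ src.V, Entails T (conjOf (tgt.label (φ w))) (conjOf (src.label w))

/-! ### Abduction problems, hypotheses, connection minimality -/

inductive AtomConj (S : Set ℕ) : ELConcept → Prop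
  | atom {A} : A ∈ S → AtomConj S (.atom A)
  | conj {C D} : AtomConj S C → AtomConj S D → AtomConj S (.conj C D)

def IsHypothesis (T : TBox) (S : Set ℕ) (C1 C2 : ℕ) (H : TBox) : Prop :=
  (∀ ci ∈ H, (AtomConj S ci.1 ∨ ci.1 = ELConcept.top) ∧ AtomConj S ci.2) ∧
  Entails (T ∪ H) (.atom C1) (.atom C2) ∧
  ∀ ci ∈ H, ¬ EntailsCI T ci

def BuiltOver (S : Set ℕ) (C : ELConcept) : Prop := C.concNames ⊆ S

/-- The TBox determined by condition (4) of the definition of connection minimality. -/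
def hypSetOf (T : TBox) (t1 t2 : DescTree) (φ : ℕ → ℕ) : Set CI :=
  {ci | ∃ w ∈ t2.V, ci = (conjOf (t1.label (φ w)), conjOf (t2.label w)) ∧
        ¬ EntailsCI T ci}

/-- Conditions (1)–(4) of connection minimality, with explicit witnessing
description trees `t1`, `t2` for `D1`, `D2` and the weak homomorphism `φ`
from `𝔗_{D₂}` to `𝔗_{D₁}`. -/
def ConnMinimalWit (T : TBox) (S : Set ℕ) (C1 C2 : ℕ) (H : TBox)
    (D1 D2 : ELConcept) (t1 t2 : DescTree) (φ : ℕ → ℕ) : Prop :=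
  BuiltOver S D1 ∧ BuiltOver S D2 ∧
  Represents t1 D1 ∧ Represents t2 D2 ∧
  Entails T (.atom C1) D1 ∧
  Entails T D2 (.atom C2) ∧
  (∀ D2', Entails T D2' (.atom C2) → PrecSq D2' D2 → PrecSq D2 D2') ∧
  WeakHom t2 t1 φ ∧
  (↑H : Set CI) = hypSetOf T t1 t2 φ

def ConnMinimal (T : TBox) (S : Set ℕ) (C1 C2 : ℕ) (H : TBox) : Prop :=
  IsHypothesis T S C1 C2 H ∧
  ∃ D1 D2 t1 t2 φ, ConnMinimalWit T S C1 C2 H D1 D2 t1 t2 φ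

/-- Packedness of a witness: no alternative `D₁'`, `φ'` (for the same `D₂`, `t₂`)
strictly enlarges one of the left-hand side labels while keeping all others. -/
def PackedWit (T : TBox) (S : Set ℕ) (C1 : ℕ) (t1 t2 : DescTree) (φ : ℕ → ℕ) : Prop :=
  ¬ ∃ (D1' : ELConcept) (t1' : DescTree) (φ' : ℕ → ℕ) (w : ℕ),
      BuiltOver S D1' ∧ Represents t1' D1' ∧ Entails T (.atom C1) D1' ∧
      WeakHom t2 t1' φ' ∧ w ∈ t2.V ∧
      t1.label (φ w) ⊂ t1'.label (φ' w) ∧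
      ∀ w' ∈ t2.V, w' ≠ w → t1.label (φ w') = t1'.label (φ' w')

def PackedConnMinimal (T : TBox) (S : Set ℕ) (C1 C2 : ℕ) (H : TBox) : Prop :=
  IsHypothesis T S C1 C2 H ∧
  ∃ D1 D2 t1 t2 φ, ConnMinimalWit T S C1 C2 H D1 D2 t1 t2 φ ∧
    PackedWit T S C1 t1 t2 φ

/-! ### First-order logic: terms, clauses, semantics -/

/-- Skolem functions: one for each (copy, axiom) pair. -/
abbrev SkFun := Bool × CI

inductive Term : Type where
  | var : ℕ → Term
  | sk0 : Term
  | app : SkFun → Term → Term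
deriving DecidableEq

/-- Ground Skolem terms. -/
inductive GTerm : Type where
  | sk0 : GTerm
  | app : SkFun → GTerm → GTerm
deriving DecidableEq

def GTerm.toTerm : GTerm → Term
  | .sk0 => .sk0
  | .app f t => .app f t.toTerm

def GTerm.depth : GTerm → ℕ
  | .sk0 => 0
  | .app _ t => t.depth + 1

inductive GTerm.Subterm : GTerm → GTerm → Prop
  | refl (t) : GTerm.Subterm t t
  | app {s t} (f) : GTerm.Subterm s t → GTerm.Subterm s (.app f t)

/-- Atoms; unary predicates `(b, A)` where `b = false` marks the original copy of the
atomic concept `A` and `b = true` its duplicate `Ā`. -/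
inductive Atm : Type where
  | conc : (Bool × ℕ) → Term → Atm
  | role : ℕ → Term → Term → Atm
deriving DecidableEq

structure Lit : Type where
  pos : Bool
  atm : Atm
deriving DecidableEq

abbrev Clause := Finset Lit

inductive GAtm : Type where
  | conc : (Bool × ℕ) → GTerm → GAtm
  | role : ℕ → GTerm → GTerm → GAtm
deriving DecidableEq

def GAtm.toAtm : GAtm → Atm
  | .conc P t => .conc P t.toTerm
  | .role r t u => .role r t.toTerm u.toTerm

structure FOInterp (α : Type) where
  c0 : α
  app : SkFun → α → α
  conc : Bool × ℕ → Set α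
  role : ℕ → Set (α × α)

def Term.eval {α : Type} (I : FOInterp α) (ρ : ℕ → α) : Term → α
  | .var x => ρ x
  | .sk0 => I.c0
  | .app f t => I.app f (t.eval I ρ)

def Atm.sat {α : Type} (I : FOInterp α) (ρ : ℕ → α) : Atm → Prop
  | .conc P t => t.eval I ρ ∈ I.conc P
  | .role r t u => (t.eval I ρ, u.eval I ρ) ∈ I.role r

def Lit.sat {α : Type} (I : FOInterp α) (ρ : ℕ → α) (l : Lit) : Prop :=
  if l.pos then l.atm.sat I ρ else ¬ l.atm.sat I ρ

/-- Satisfaction of a clause: the universal closure of the disjunction holds. -/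
def ClauseSat {α : Type} (I : FOInterp α) (c : Clause) : Prop :=
  ∀ ρ : ℕ → α, ∃ l ∈ c, l.sat I ρ

def CModels {α : Type} (I : FOInterp α) (Ψ : Set Clause) : Prop :=
  ∀ c ∈ Ψ, ClauseSat I c

def CEntails (Ψ : Set Clause) (c : Clause) : Prop :=
  ∀ (α : Type) (I : FOInterp α), CModels I Ψ → ClauseSat I c

def ClEntails (c d : Clause) : Prop := CEntails {c} d

def IsPrimeImplicate (Ψ : Set Clause) (c : Clause) : Prop :=
  CEntails Ψ c ∧ ∀ c' : Clause, CEntails Ψ c' → ClEntails c' c → ClEntails c c'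

def Term.vars : Term → Set ℕ
  | .var x => {x}
  | .sk0 => ∅
  | .app _ t => t.vars

def Atm.vars : Atm → Set ℕ
  | .conc _ t => t.vars
  | .role _ t u => t.vars ∪ u.vars

def ClauseVars (c : Clause) : Set ℕ := {x | ∃ l ∈ c, x ∈ l.atm.vars}

def ClauseGround (c : Clause) : Prop := ClauseVars c = ∅
def ClausePositive (c : Clause) : Prop := ∀ l ∈ c, l.pos = true
def ClauseNegative (c : Clause) : Prop := ∀ l ∈ c, l.pos = false

def Atm.inSig (S : Set ℕ) : Atm → Prop
  | .conc P _ => P.2 ∈ S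
  | .role _ _ _ => True

def ClauseInSig (S : Set ℕ) (c : Clause) : Prop := ∀ l ∈ c, l.atm.inSig S

/-- Positive ground prime implicates over `Σ ∪ N_R`. -/
def PIpos (S : Set ℕ) (Ψ : Set Clause) : Set Clause :=
  {c | IsPrimeImplicate Ψ c ∧ ClauseGround c ∧ ClausePositive c ∧ ClauseInSig S c}

/-- Negative ground prime implicates over `Σ ∪ N_R`. -/
def PIneg (S : Set ℕ) (Ψ : Set Clause) : Set Clause :=
  {c | IsPrimeImplicate Ψ c ∧ ClauseGround c ∧ ClauseNegative c ∧ ClauseInSig S c}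

/-- The ground atom `a` belongs (as a unit clause) to `PI^{g+}_Σ(Ψ)`. -/
def InPIpos (S : Set ℕ) (Ψ : Set Clause) (a : GAtm) : Prop :=
  ({⟨true, a.toAtm⟩} : Clause) ∈ PIpos S Ψ

/-! ### Substitutions and resolution -/

def Term.subst (σ : ℕ → Term) : Term → Term
  | .var x => σ x
  | .sk0 => .sk0
  | .app f t => .app f (t.subst σ)

def Atm.subst (σ : ℕ → Term) : Atm → Atm
  | .conc P t => .conc P (t.subst σ)
  | .role r t u => .role r (t.subst σ) (u.subst σ)

def Lit.subst (σ : ℕ → Term) (l : Lit) : Lit := ⟨l.pos, l.atm.subst σ⟩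

def ClauseSubst (σ : ℕ → Term) (c : Clause) : Clause := c.image (Lit.subst σ)

def IsUnifier (σ : ℕ → Term) (a b : Atm) : Prop := a.subst σ = b.subst σ

def IsMGU (σ : ℕ → Term) (a b : Atm) : Prop :=
  IsUnifier σ a b ∧ ∀ τ, IsUnifier τ a b → ∃ δ, ∀ x, (σ x).subst δ = τ x

/-- Resolution derivations from `Ψ`, where every resolvent must satisfy `ok`. -/
inductive Deriv (Ψ : Set Clause) (ok : Clause → Prop) : Clause → Prop
  | hyp {c : Clause} : c ∈ Ψ → Deriv Ψ ok c
  | res {c₁ c₂ : Clause} {a b : Atm} {σ : ℕ → Term} :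
      Deriv Ψ ok c₁ → Deriv Ψ ok c₂ →
      (⟨true, a⟩ : Lit) ∈ c₁ → (⟨false, b⟩ : Lit) ∈ c₂ → IsMGU σ a b →
      ok (ClauseSubst σ (c₁.erase ⟨true, a⟩ ∪ c₂.erase ⟨false, b⟩)) →
      Deriv Ψ ok (ClauseSubst σ (c₁.erase ⟨true, a⟩ ∪ c₂.erase ⟨false, b⟩))
  | factor {c : Clause} {l₁ l₂ : Lit} {σ : ℕ → Term} :
      Deriv Ψ ok c → l₁ ∈ c → l₂ ∈ c → l₁ ≠ l₂ → l₁.pos = l₂.pos →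
      IsMGU σ l₁.atm l₂.atm →
      ok (ClauseSubst σ (c.erase l₂)) →
      Deriv Ψ ok (ClauseSubst σ (c.erase l₂))

/-! ### The translation Φ of an abduction problem -/

def vx : Term := .var 0
def vy : Term := .var 1
def pcl (b : Bool) (A : ℕ) (t : Term) : Lit := ⟨true, .conc (b, A) t⟩
def ncl (b : Bool) (A : ℕ) (t : Term) : Lit := ⟨false, .conc (b, A) t⟩
def prl (r : ℕ) (t u : Term) : Lit := ⟨true, .role r t u⟩
def nrl (r : ℕ) (t u : Term) : Lit := ⟨false, .role r t u⟩

def clausesOf (b : Bool) (ci : CI) : Set Clause :=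
  match ci with
  | (.atom A, .atom B) => {({ncl b A vx, pcl b B vx} : Clause)}
  | (.conj (.atom A₁) (.atom A₂), .atom B) =>
      {({ncl b A₁ vx, ncl b A₂ vx, pcl b B vx} : Clause)}
  | (.ex r (.atom A), .atom B) =>
      {({nrl r vx vy, ncl b A vy, pcl b B vx} : Clause)}
  | (.atom A, .ex r (.atom B)) =>
      {({ncl b A vx, prl r vx (.app (b, (.atom A, .ex r (.atom B))) vx)} : Clause),
       ({ncl b A vx, pcl b B (.app (b, (.atom A, .ex r (.atom B))) vx)} : Clause)}
  | _ => ∅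

/-- The clausal translation `Φ` of the abduction problem `⟨T, Σ, C₁ ⊑ C₂⟩`. -/
def Translation (T : TBox) (C1 C2 : ℕ) : Set Clause :=
  (⋃ ci ∈ T, clausesOf false ci ∪ clausesOf true ci) ∪
  {({pcl false C1 .sk0} : Clause), ({ncl true C2 .sk0} : Clause)}

/-- The presaturation `Φ_p` of a clause set. -/
def presat (Ψ : Set Clause) : Set Clause :=
  Ψ ∪ {c | ∃ (b : Bool) (A B : ℕ),
        c = ({ncl b A vx, pcl b B vx} : Clause) ∧ CEntails Ψ c}

/-! ### Herbrand interpretations -/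

def herb (S : Set GAtm) : FOInterp GTerm where
  c0 := .sk0
  app := .app
  conc := fun P => {t | GAtm.conc P t ∈ S}
  role := fun r => {p | GAtm.role r p.1 p.2 ∈ S}

def HModels (S : Set GAtm) (Ψ : Set Clause) : Prop := CModels (herb S) Ψ

def piPosAtoms (S : Set ℕ) (Ψ : Set Clause) : Set GAtm := {a | InPIpos S Ψ a}

/-- EL semantics of a concept in a Herbrand interpretation (original predicates). -/
def gsem (I : Set GAtm) : ELConcept → Set GTerm
  | .top => Set.univ
  | .atom A => {t | GAtm.conc (false, A) t ∈ I}
  | .conj C D => gsem I C ∩ gsem I D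
  | .ex r C => {t | ∃ u, GAtm.role r t u ∈ I ∧ u ∈ gsem I C}

/-! ### Canonical models of description trees -/

/-- The canonical model `I^c(sl)` of a description tree with Skolem labeling `sl`. -/
def canonModel (t : DescTree) (sl : ℕ → GTerm) : Set GAtm :=
  {a | ∃ e ∈ t.E, a = GAtm.role e.2.1 (sl e.1) (sl e.2.2)} ∪
  {a | ∃ v ∈ t.V, ∃ A ∈ t.label v, a = GAtm.conc (false, A) (sl v)}

/-- The unary-predicate part `I^c_A(sl)` of the canonical model, as labelled pairs. -/
def canonA (t : DescTree) (sl : ℕ → GTerm) : Set (ℕ × GTerm) :=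
  {p | ∃ v ∈ t.V, p.1 ∈ t.label v ∧ p.2 = sl v}

/-- The clause `⋁_{v ∈ V₂, B ∈ l₂(v)} ¬B̄(sl v)`. -/
def negTreeClause (t : DescTree) (sl : ℕ → GTerm) : Clause :=
  t.V.biUnion (fun v =>
    (t.label v).image (fun B => (⟨false, Atm.conc (true, B) (sl v).toTerm⟩ : Lit)))

/-! ### Constructible hypotheses -/

def negClauseOf (B : Finset (ℕ × GTerm)) : Clause :=
  B.image (fun p => (⟨false, Atm.conc (true, p.1) p.2.toTerm⟩ : Lit))

def posUnit (p : ℕ × GTerm) : Clause := {⟨true, Atm.conc (false, p.1) p.2.toTerm⟩}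

/-- `C_{X,t} = ⊓{A | A(t) ∈ X}`. -/
noncomputable def CAt (X : Finset (ℕ × GTerm)) (t : GTerm) : ELConcept :=
  conjOf ((X.filter (fun p => p.2 = t)).image Prod.fst)

/-- `H` is the hypothesis constructed from the sets `A` and `B` of ground atoms. -/
def ConstructibleVia (S : Set ℕ) (Ψ : Set Clause)
    (A B : Finset (ℕ × GTerm)) (H : TBox) : Prop :=
  A.Nonempty ∧ B.Nonempty ∧
  negClauseOf B ∈ PIneg S Ψ ∧
  (∀ p ∈ B, ∃ a, InPIpos S Ψ (GAtm.conc (false, a) p.2)) ∧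
  ((↑A : Set (ℕ × GTerm)) =
    {q | InPIpos S Ψ (GAtm.conc (false, q.1) q.2) ∧ ∃ p ∈ B, p.2 = q.2}) ∧
  ((↑H : Set CI) =
    {ci | ∃ p ∈ B, ci = (CAt A p.2, CAt B p.2) ∧ ¬ PrecSq (CAt B p.2) (CAt A p.2)})

def Constructible (S : Set ℕ) (Ψ : Set Clause) (H : TBox) : Prop :=
  ∃ A B, ConstructibleVia S Ψ A B H

/-! ### Clause shapes I3–I7, signature counts -/

def isI3 (c : Clause) : Prop :=
  ∃ P Q : Bool × ℕ, c = ({⟨false, .conc P vx⟩, ⟨true, .conc Q vx⟩} : Clause)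

def isI4 (c : Clause) : Prop :=
  ∃ P₁ P₂ Q : Bool × ℕ,
    c = ({⟨false, .conc P₁ vx⟩, ⟨false, .conc P₂ vx⟩, ⟨true, .conc Q vx⟩} : Clause)

def isI5 (c : Clause) : Prop :=
  ∃ (r : ℕ) (P Q : Bool × ℕ),
    c = ({⟨false, .role r vx vy⟩, ⟨false, .conc P vy⟩, ⟨true, .conc Q vx⟩} : Clause)

def isI7 (c : Clause) : Prop :=
  ∃ (P Q : Bool × ℕ) (f : SkFun),
    c = ({⟨false, .conc P vx⟩, ⟨true, .conc Q (.app f vx)⟩} : Clause)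

/-- The atomic concept `A_sk` occurring positively in the I7-clause introducing `sk`
(as a predicate, with the copy flag of `sk`). -/
def skHeadPred (f : SkFun) : Bool × ℕ :=
  (f.1, match f.2.2 with
        | .ex _ (.atom B) => B
        | _ => 0)

def Term.funs : Term → Set SkFun
  | .var _ => ∅
  | .sk0 => ∅
  | .app f t => insert f t.funs

def Atm.funs : Atm → Set SkFun
  | .conc _ t => t.funs
  | .role _ t u => t.funs ∪ u.funs

def clauseFuns (c : Clause) : Set SkFun := {f | ∃ l ∈ c, f ∈ l.atm.funs}

def clauseConcs (c : Clause) : Set (Bool × ℕ) := {P | ∃ l ∈ c, ∃ t, l.atm = Atm.conc P t}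

/-- The number of atomic concepts occurring in a clause set. -/
noncomputable def numConcs (Ψ : Set Clause) : ℕ := Set.ncard {P | ∃ c ∈ Ψ, P ∈ clauseConcs c}

/-- The number of occurrences of existential role restrictions in a TBox. -/
def exOccs (T : TBox) : ℕ := T.sum (fun ci => ci.1.exCount + ci.2.exCount)

/-- The number of Skolem functions occurring in `Ψ` introduced for the original copy. -/
noncomputable def numOrigSk (Ψ : Set Clause) : ℕ :=
  Set.ncard {f : SkFun | f.1 = false ∧ ∃ c ∈ Ψ, f ∈ clauseFuns c}

def unitC (P : Bool × ℕ) (t : GTerm) : Clause := {⟨true, .conc P t.toTerm⟩}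
def negUnitC (P : Bool × ℕ) (t : GTerm) : Clause := {⟨false, .conc P t.toTerm⟩}

/-! ### Skolem trees and solution trees -/

structure SkolemTree where
  V : Finset ℕ
  root : ℕ
  E : Finset (ℕ × ℕ)
  s : ℕ → GTerm
  dep : ℕ → ℕ
  root_mem : root ∈ V
  s_root : s root = .sk0
  edge_mem : ∀ e ∈ E, e.1 ∈ V ∧ e.2 ∈ V
  edge_term : ∀ e ∈ E, s e.2 = s e.1 ∨ ∃ f, s e.2 = GTerm.app f (s e.1)
  parent_unique : ∀ e ∈ E, ∀ e' ∈ E, e.2 = e'.2 → e = e'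
  parent_exists : ∀ v ∈ V, v ≠ root → ∃ e ∈ E, e.2 = v
  dep_root : dep root = 0
  dep_edge : ∀ e ∈ E, dep e.2 = dep e.1 + 1

/-- `v` is an ancestor of `w` (every node is an ancestor of itself). -/
def SkolemTree.Ancestor (F : SkolemTree) (v w : ℕ) : Prop :=
  Relation.ReflTransGen (fun a b => (a, b) ∈ F.E) v w

/-- The descendants of `v` (the nodes of the subtree under `v`). -/
def SkolemTree.Desc (F : SkolemTree) (v : ℕ) : Set ℕ := {w | F.Ancestor v w}

/-- The positive labeling `l⁺`. -/
def posLab (Ψ : Set Clause) (F : SkolemTree) (v : ℕ) : Set ℕ :=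
  {A | InPIpos Set.univ Ψ (GAtm.conc (false, A) (F.s v))}

def SkolemTree.children (F : SkolemTree) (v : ℕ) : Finset ℕ :=
  (F.E.filter (fun e => e.1 = v)).image Prod.snd

def SkolemTree.leaves (F : SkolemTree) : Finset ℕ :=
  F.V.filter (fun v => F.E.filter (fun e => e.1 = v) = ∅)

/-- The unit role facts `{r(t, sk(t)) ∈ PI^{g+}}`. -/
def roleFacts (Ψ : Set Clause) : Set Clause :=
  {c | (∃ (r : ℕ) (t : GTerm) (f : SkFun),
        c = ({⟨true, Atm.role r t.toTerm (GTerm.app f t).toTerm⟩} : Clause)) ∧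
       c ∈ PIpos Set.univ Ψ}

def nonGroundOf (Ψ : Set Clause) : Set Clause := {c | c ∈ Ψ ∧ ¬ ClauseGround c}

/-- Negative labeling `l⁻` for a Skolem tree (labels are duplicate concept names,
recorded by their underlying name in `N_C`). -/
def IsNegLabeling (Ψ : Set Clause) (C2 : ℕ) (F : SkolemTree) (ln : ℕ → ℕ) : Prop :=
  ln F.root = C2 ∧
  ∀ v ∈ F.V, F.children v ≠ ∅ →
    Deriv ({negUnitC (true, ln v) (F.s v)} ∪ roleFacts Ψ ∪ nonGroundOf (presat Ψ))
      (fun _ => True)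
      ((F.children v).image
        (fun w => (⟨false, Atm.conc (true, ln w) (F.s w).toTerm⟩ : Lit)))

/-- The clause `φ_{F,l⁻}` determined by the leaves.  (Clauses are finite sets of
literals, so it is automatically considered up to repetition of literals.) -/
def leavesClause (F : SkolemTree) (ln : ℕ → ℕ) : Clause :=
  F.leaves.image (fun v => (⟨false, Atm.conc (true, ln v) (F.s v).toTerm⟩ : Lit))

def IsSolutionTree (Ψ : Set Clause) (C2 : ℕ) (F : SkolemTree) (ln : ℕ → ℕ) : Prop :=
  (∀ v ∈ F.V, (posLab Ψ F v).Nonempty) ∧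
  IsNegLabeling Ψ C2 F ln ∧
  leavesClause F ln ∈ PIneg Set.univ Ψ ∧
  ∃ (A B : Finset (ℕ × GTerm)) (H : TBox),
    ConstructibleVia Set.univ Ψ A B H ∧
    (↑B : Set (ℕ × GTerm)) = {p | ∃ v ∈ F.leaves, p = (ln v, F.s v)}

/-- The solution `{⊓l⁺(v) ⊑ l⁻(v) | v a leaf}` of a solution tree. -/
def treeSol (Ψ : Set Clause) (F : SkolemTree) (ln : ℕ → ℕ) : Set CI :=
  {ci | ∃ v ∈ F.leaves, ∃ s : Finset ℕ, (↑s : Set ℕ) = posLab Ψ F v ∧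
        ci = (conjOf s, ELConcept.atom (ln v))}

/-- Minimality: no solution tree with strictly fewer nodes has a solution
included in the solution of this one. -/
def MinimalSolutionTree (Ψ : Set Clause) (C2 : ℕ) (F : SkolemTree) (ln : ℕ → ℕ) : Prop :=
  IsSolutionTree Ψ C2 F ln ∧
  ∀ (F' : SkolemTree) (ln' : ℕ → ℕ),
    IsSolutionTree Ψ C2 F' ln' →
    treeSol Ψ F' ln' ⊆ treeSol Ψ F ln →
    F.V.card ≤ F'.V.card

/-- Replace the (unique) occurrence of `old` as a suffix of a ground term by `new`. -/
def GTerm.replaceSuffix (old new : GTerm) : GTerm → GTerm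
  | .sk0 => if GTerm.sk0 = old then new else .sk0
  | .app f u => if GTerm.app f u = old then new else .app f (GTerm.replaceSuffix old new u)


/-! ### Auxiliary development for STATEMENT 7 -/

section Aux7

variable {T : TBox} {C1 C2 : ℕ}

/-- Unit clause of a ground atom. -/
def gunit (a : GAtm) : Clause := {⟨true, a.toAtm⟩}

/-- Ground atoms entailed by the translation. -/
def H0 (T : TBox) (C1 C2 : ℕ) : Set GAtm :=
  {a | CEntails (Translation T C1 C2) (gunit a)}

def evalG {α : Type} (I : FOInterp α) : GTerm → α
  | .sk0 => I.c0
  | .app f t => I.app f (evalG I t)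

lemma eval_toTerm {α : Type} (I : FOInterp α) (ρ : ℕ → α) :
    ∀ t : GTerm, Term.eval I ρ t.toTerm = evalG I t
  | .sk0 => rfl
  | .app f t => by
      simp [GTerm.toTerm, Term.eval, evalG, eval_toTerm I ρ t]

def gsat {α : Type} (I : FOInterp α) : GAtm → Prop
  | .conc Q t => evalG I t ∈ I.conc Q
  | .role r t u => (evalG I t, evalG I u) ∈ I.role r

lemma sat_toAtm {α : Type} (I : FOInterp α) (ρ : ℕ → α) (a : GAtm) :
    Atm.sat I ρ a.toAtm ↔ gsat I a := by
  cases a <;> simp [GAtm.toAtm, Atm.sat, gsat, eval_toTerm]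

lemma mem_H0 {a : GAtm}
    (h : ∀ (α : Type) (I : FOInterp α), Nonempty α →
      CModels I (Translation T C1 C2) → gsat I a) : a ∈ H0 T C1 C2 := by
  intro α I hI ρ
  refine ⟨⟨true, a.toAtm⟩, Finset.mem_singleton_self _, ?_⟩
  have := h α I ⟨ρ 0⟩ hI
  simpa [Lit.sat, sat_toAtm] using this

lemma H0_elim {a : GAtm} (ha : a ∈ H0 T C1 C2) {α : Type} (I : FOInterp α)
    (hne : Nonempty α) (hI : CModels I (Translation T C1 C2)) : gsat I a := by
  obtain ⟨x⟩ := hne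
  obtain ⟨l, hl, hs⟩ := ha α I hI (fun _ => x)
  rw [gunit, Finset.mem_singleton] at hl
  subst hl
  rw [← sat_toAtm I (fun _ => x)]
  simpa [Lit.sat] using hs

lemma mem_transl {b : Bool} {ci : CI} (h : ci ∈ T) {c : Clause}
    (hc : c ∈ clausesOf b ci) : c ∈ Translation T C1 C2 := by
  have h2 : c ∈ clausesOf false ci ∪ clausesOf true ci := by
    cases b
    · exact Or.inl hc
    · exact Or.inr hc
  exact Set.mem_union_left _ (Set.mem_biUnion h h2)

lemma unitC1_mem : ({pcl false C1 .sk0} : Clause) ∈ Translation T C1 C2 :=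
  Set.mem_union_right _ (Set.mem_insert _ _)

lemma unitC2_mem : ({ncl true C2 .sk0} : Clause) ∈ Translation T C1 C2 :=
  Set.mem_union_right _ (Set.mem_insert_of_mem _ rfl)

lemma C1_mem_H0 : GAtm.conc (false, C1) GTerm.sk0 ∈ H0 T C1 C2 := by
  intro α I hI
  exact hI _ unitC1_mem

/-! Closure properties of `H0` along the clauses of the translation. -/

lemma H0_shape1 {b : Bool} {A B : ℕ}
    (h : ((ELConcept.atom A, ELConcept.atom B) : CI) ∈ T) {t : GTerm}
    (ha : GAtm.conc (b, A) t ∈ H0 T C1 C2) :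
    GAtm.conc (b, B) t ∈ H0 T C1 C2 := by
  refine mem_H0 (fun α I hne hI => ?_)
  have hA : evalG I t ∈ I.conc (b, A) := H0_elim ha I hne hI
  have hc := hI _ (mem_transl (b := b) h
    (show _ ∈ clausesOf b (ELConcept.atom A, ELConcept.atom B) from rfl))
  obtain ⟨l, hl, hs⟩ := hc (fun _ => evalG I t)
  simp only [Finset.mem_insert, Finset.mem_singleton] at hl
  rcases hl with rfl | rfl
  · exfalso
    simp only [Lit.sat, ncl, Atm.sat, vx, Term.eval, Bool.false_eq_true, if_false] at hs
    exact hs hA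
  · simpa [Lit.sat, pcl, Atm.sat, vx, Term.eval, gsat] using hs

lemma H0_shape2 {b : Bool} {A₁ A₂ B : ℕ}
    (h : ((ELConcept.conj (.atom A₁) (.atom A₂), ELConcept.atom B) : CI) ∈ T) {t : GTerm}
    (ha1 : GAtm.conc (b, A₁) t ∈ H0 T C1 C2)
    (ha2 : GAtm.conc (b, A₂) t ∈ H0 T C1 C2) :
    GAtm.conc (b, B) t ∈ H0 T C1 C2 := by
  refine mem_H0 (fun α I hne hI => ?_)
  have hA1 : evalG I t ∈ I.conc (b, A₁) := H0_elim ha1 I hne hI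
  have hA2 : evalG I t ∈ I.conc (b, A₂) := H0_elim ha2 I hne hI
  have hc := hI _ (mem_transl (b := b) h
    (show _ ∈ clausesOf b (ELConcept.conj (.atom A₁) (.atom A₂), ELConcept.atom B) from rfl))
  obtain ⟨l, hl, hs⟩ := hc (fun _ => evalG I t)
  simp only [Finset.mem_insert, Finset.mem_singleton] at hl
  rcases hl with rfl | rfl | rfl
  · exfalso
    simp only [Lit.sat, ncl, Atm.sat, vx, Term.eval, Bool.false_eq_true, if_false] at hs
    exact hs hA1
  · exfalso
    simp only [Lit.sat, ncl, Atm.sat, vx, Term.eval, Bool.false_eq_true, if_false] at hs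
    exact hs hA2
  · simpa [Lit.sat, pcl, Atm.sat, vx, Term.eval, gsat] using hs

lemma H0_shape3 {b : Bool} {r A B : ℕ}
    (h : ((ELConcept.ex r (.atom A), ELConcept.atom B) : CI) ∈ T) {t u : GTerm}
    (hr : GAtm.role r t u ∈ H0 T C1 C2)
    (ha : GAtm.conc (b, A) u ∈ H0 T C1 C2) :
    GAtm.conc (b, B) t ∈ H0 T C1 C2 := by
  refine mem_H0 (fun α I hne hI => ?_)
  have hR : (evalG I t, evalG I u) ∈ I.role r := H0_elim hr I hne hI
  have hA : evalG I u ∈ I.conc (b, A) := H0_elim ha I hne hI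
  have hc := hI _ (mem_transl (b := b) h
    (show _ ∈ clausesOf b (ELConcept.ex r (.atom A), ELConcept.atom B) from rfl))
  obtain ⟨l, hl, hs⟩ := hc (fun n => if n = 0 then evalG I t else evalG I u)
  simp only [Finset.mem_insert, Finset.mem_singleton] at hl
  rcases hl with rfl | rfl | rfl
  · exfalso
    simp only [Lit.sat, nrl, Atm.sat, vx, vy, Term.eval, Bool.false_eq_true, if_false,
      reduceIte] at hs
    exact hs hR
  · exfalso
    simp only [Lit.sat, ncl, Atm.sat, vx, vy, Term.eval, Bool.false_eq_true, if_false,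
      reduceIte] at hs
    exact hs hA
  · simpa [Lit.sat, pcl, Atm.sat, vx, Term.eval, gsat] using hs

lemma H0_shape4 {b : Bool} {A r B : ℕ}
    (h : ((ELConcept.atom A, ELConcept.ex r (.atom B)) : CI) ∈ T) {t : GTerm}
    (ha : GAtm.conc (b, A) t ∈ H0 T C1 C2) :
    GAtm.role r t (GTerm.app (b, (ELConcept.atom A, ELConcept.ex r (.atom B))) t)
      ∈ H0 T C1 C2 ∧
    GAtm.conc (b, B) (GTerm.app (b, (ELConcept.atom A, ELConcept.ex r (.atom B))) t)
      ∈ H0 T C1 C2 := by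
  constructor
  · refine mem_H0 (fun α I hne hI => ?_)
    have hA : evalG I t ∈ I.conc (b, A) := H0_elim ha I hne hI
    have hc := hI _ (mem_transl (b := b) h
      (show _ ∈ clausesOf b (ELConcept.atom A, ELConcept.ex r (.atom B)) from
        Set.mem_insert _ _))
    obtain ⟨l, hl, hs⟩ := hc (fun _ => evalG I t)
    simp only [Finset.mem_insert, Finset.mem_singleton] at hl
    rcases hl with rfl | rfl
    · exfalso
      simp only [Lit.sat, ncl, Atm.sat, vx, Term.eval, Bool.false_eq_true, if_false] at hs
      exact hs hA
    · simpa [Lit.sat, prl, Atm.sat, vx, Term.eval, gsat, evalG] using hs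
  · refine mem_H0 (fun α I hne hI => ?_)
    have hA : evalG I t ∈ I.conc (b, A) := H0_elim ha I hne hI
    have hc := hI _ (mem_transl (b := b) h
      (show _ ∈ clausesOf b (ELConcept.atom A, ELConcept.ex r (.atom B)) from
        Set.mem_insert_of_mem _ rfl))
    obtain ⟨l, hl, hs⟩ := hc (fun _ => evalG I t)
    simp only [Finset.mem_insert, Finset.mem_singleton] at hl
    rcases hl with rfl | rfl
    · exfalso
      simp only [Lit.sat, ncl, Atm.sat, vx, Term.eval, Bool.false_eq_true, if_false] at hs
      exact hs hA
    · simpa [Lit.sat, pcl, Atm.sat, vx, Term.eval, gsat, evalG] using hs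

end Aux7

section Aux7b

variable {T : TBox} {C1 C2 : ℕ}

lemma genModel (hNF : NormalForm T)
    (hC2 : GAtm.conc (true, C2) GTerm.sk0 ∉ H0 T C1 C2)
    {α : Type} (ι : GTerm → α) (hinj : Function.Injective ι)
    (P : FOInterp α)
    (hc0 : P.c0 = ι GTerm.sk0)
    (happ : ∀ f t, P.app f (ι t) = ι (GTerm.app f t))
    (hconc : ∀ Q x, x ∈ P.conc Q ↔ ∃ t, x = ι t ∧ GAtm.conc Q t ∈ H0 T C1 C2)
    (hrole : ∀ r x y, (x, y) ∈ P.role r ↔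
      ∃ t u, x = ι t ∧ y = ι u ∧ GAtm.role r t u ∈ H0 T C1 C2) :
    CModels P (Translation T C1 C2) := by
  intro c hc
  rcases hc with hc | hc
  · -- clauses from the TBox
    simp only [Set.mem_iUnion] at hc
    obtain ⟨ci, hci, hc⟩ := hc
    obtain ⟨b, hc⟩ : ∃ b, c ∈ clausesOf b ci := by
      rcases hc with h | h
      exacts [⟨false, h⟩, ⟨true, h⟩]
    rcases hNF ci hci with ⟨A, B, rfl⟩ | ⟨A₁, A₂, B, rfl⟩ | ⟨r, A, B, rfl⟩ | ⟨A, r, B, rfl⟩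
    · simp only [clausesOf, Set.mem_singleton_iff] at hc
      subst hc
      intro ρ
      by_cases h : ρ 0 ∈ P.conc (b, A)
      · obtain ⟨t, ht, hA⟩ := (hconc _ _).1 h
        refine ⟨pcl b B vx, by simp, ?_⟩
        simp only [Lit.sat, pcl, Atm.sat, vx, Term.eval, if_true]
        rw [ht]
        exact (hconc _ _).2 ⟨t, rfl, H0_shape1 hci hA⟩
      · exact ⟨ncl b A vx, by simp,
          by simpa [Lit.sat, ncl, Atm.sat, vx, Term.eval] using h⟩
    · simp only [clausesOf, Set.mem_singleton_iff] at hc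
      subst hc
      intro ρ
      by_cases h1 : ρ 0 ∈ P.conc (b, A₁)
      · by_cases h2 : ρ 0 ∈ P.conc (b, A₂)
        · obtain ⟨t, ht, hA1⟩ := (hconc _ _).1 h1
          obtain ⟨t', ht', hA2⟩ := (hconc _ _).1 h2
          have htt : t' = t := hinj (ht'.symm.trans ht)
          subst htt
          refine ⟨pcl b B vx, by simp, ?_⟩
          simp only [Lit.sat, pcl, Atm.sat, vx, Term.eval, if_true]
          rw [ht]
          exact (hconc _ _).2 ⟨_, rfl, H0_shape2 hci hA1 hA2⟩
        · exact ⟨ncl b A₂ vx, by simp,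
            by simpa [Lit.sat, ncl, Atm.sat, vx, Term.eval] using h2⟩
      · exact ⟨ncl b A₁ vx, by simp,
          by simpa [Lit.sat, ncl, Atm.sat, vx, Term.eval] using h1⟩
    · simp only [clausesOf, Set.mem_singleton_iff] at hc
      subst hc
      intro ρ
      by_cases hR : (ρ 0, ρ 1) ∈ P.role r
      · by_cases hA : ρ 1 ∈ P.conc (b, A)
        · obtain ⟨t, u, ht, hu, hru⟩ := (hrole _ _ _).1 hR
          obtain ⟨u', hu', hAu⟩ := (hconc _ _).1 hA
          have huu : u' = u := hinj (hu'.symm.trans hu)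
          subst huu
          refine ⟨pcl b B vx, by simp, ?_⟩
          simp only [Lit.sat, pcl, Atm.sat, vx, Term.eval, if_true]
          rw [ht]
          exact (hconc _ _).2 ⟨t, rfl, H0_shape3 hci hru hAu⟩
        · exact ⟨ncl b A vy, by simp,
            by simpa [Lit.sat, ncl, Atm.sat, vy, Term.eval] using hA⟩
      · exact ⟨nrl r vx vy, by simp,
          by simpa [Lit.sat, nrl, Atm.sat, vx, vy, Term.eval] using hR⟩
    · simp only [clausesOf, Set.mem_insert_iff, Set.mem_singleton_iff] at hc
      rcases hc with rfl | rfl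
      · intro ρ
        by_cases h : ρ 0 ∈ P.conc (b, A)
        · obtain ⟨t, ht, hA⟩ := (hconc _ _).1 h
          refine ⟨prl r vx (.app (b, (.atom A, .ex r (.atom B))) vx), by simp, ?_⟩
          simp only [Lit.sat, prl, Atm.sat, vx, Term.eval, if_true]
          rw [ht, happ]
          exact (hrole _ _ _).2 ⟨t, _, rfl, rfl, (H0_shape4 hci hA).1⟩
        · exact ⟨ncl b A vx, by simp,
            by simpa [Lit.sat, ncl, Atm.sat, vx, Term.eval] using h⟩
      · intro ρ
        by_cases h : ρ 0 ∈ P.conc (b, A)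
        · obtain ⟨t, ht, hA⟩ := (hconc _ _).1 h
          refine ⟨pcl b B (.app (b, (.atom A, .ex r (.atom B))) vx), by simp, ?_⟩
          simp only [Lit.sat, pcl, Atm.sat, vx, Term.eval, if_true]
          rw [ht, happ]
          exact (hconc _ _).2 ⟨_, rfl, (H0_shape4 hci hA).2⟩
        · exact ⟨ncl b A vx, by simp,
            by simpa [Lit.sat, ncl, Atm.sat, vx, Term.eval] using h⟩
  · -- the two ground unit clauses
    simp only [Set.mem_insert_iff, Set.mem_singleton_iff] at hc
    rcases hc with rfl | rfl
    · intro ρ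
      refine ⟨pcl false C1 .sk0, by simp, ?_⟩
      simp only [Lit.sat, pcl, Atm.sat, Term.eval, if_true]
      rw [hc0]
      exact (hconc _ _).2 ⟨GTerm.sk0, rfl, C1_mem_H0⟩
    · intro ρ
      refine ⟨ncl true C2 .sk0, by simp, ?_⟩
      simp only [Lit.sat, ncl, Atm.sat, Term.eval, Bool.false_eq_true, if_false]
      rw [hc0]
      intro h
      obtain ⟨t, ht, hmem⟩ := (hconc _ _).1 h
      have : t = GTerm.sk0 := (hinj ht).symm
      subst this
      exact hC2 hmem

end Aux7b

section Aux7c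

variable {T : TBox} {C1 C2 : ℕ}

open Classical in
/-- Skolem function interpretation on an EL model. -/
noncomputable def Japp {α : Type} (I : Interp α) (d : α) (f : SkFun) (x : α) : α :=
  match f.2.2 with
  | ELConcept.ex r (ELConcept.atom B) =>
      if h : ∃ e, (x, e) ∈ I.role r ∧ e ∈ I.conc B then h.choose else d
  | _ => d

noncomputable def Jint {α : Type} (I : Interp α) (d : α) : FOInterp α where
  c0 := d
  app := Japp I d
  conc := fun P => I.conc P.2
  role := I.role

lemma Japp_spec {α : Type} (I : Interp α) (d : α) (b : Bool) (A r B : ℕ) (x : α)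
    (h : ∃ e, (x, e) ∈ I.role r ∧ e ∈ I.conc B) :
    (x, Japp I d (b, (ELConcept.atom A, ELConcept.ex r (ELConcept.atom B))) x) ∈ I.role r ∧
      Japp I d (b, (ELConcept.atom A, ELConcept.ex r (ELConcept.atom B))) x ∈ I.conc B := by
  classical
  have : Japp I d (b, (ELConcept.atom A, ELConcept.ex r (ELConcept.atom B))) x
      = if h' : ∃ e, (x, e) ∈ I.role r ∧ e ∈ I.conc B then h'.choose else d := rfl
  rw [this, dif_pos h]
  exact ⟨h.choose_spec.1, h.choose_spec.2⟩

lemma Jmodels {α : Type} (I : Interp α) (d : α) (hNF : NormalForm T)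
    (hM : Models I T) (hd1 : d ∈ I.conc C1) (hd2 : d ∉ I.conc C2) :
    CModels (Jint I d) (Translation T C1 C2) := by
  intro c hc
  rcases hc with hc | hc
  · simp only [Set.mem_iUnion] at hc
    obtain ⟨ci, hci, hc⟩ := hc
    obtain ⟨b, hc⟩ : ∃ b, c ∈ clausesOf b ci := by
      rcases hc with h | h
      exacts [⟨false, h⟩, ⟨true, h⟩]
    rcases hNF ci hci with ⟨A, B, rfl⟩ | ⟨A₁, A₂, B, rfl⟩ | ⟨r, A, B, rfl⟩ | ⟨A, r, B, rfl⟩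
    · simp only [clausesOf, Set.mem_singleton_iff] at hc
      subst hc
      intro ρ
      by_cases h : ρ 0 ∈ I.conc A
      · refine ⟨pcl b B vx, by simp, ?_⟩
        simp only [Lit.sat, pcl, Atm.sat, vx, Term.eval, if_true]
        exact hM _ hci (show ρ 0 ∈ (ELConcept.atom A).sem I from h)
      · exact ⟨ncl b A vx, by simp,
          by simpa [Lit.sat, ncl, Atm.sat, vx, Term.eval, Jint] using h⟩
    · simp only [clausesOf, Set.mem_singleton_iff] at hc
      subst hc
      intro ρ
      by_cases h1 : ρ 0 ∈ I.conc A₁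
      · by_cases h2 : ρ 0 ∈ I.conc A₂
        · refine ⟨pcl b B vx, by simp, ?_⟩
          simp only [Lit.sat, pcl, Atm.sat, vx, Term.eval, if_true]
          exact hM _ hci
            (show ρ 0 ∈ (ELConcept.conj (.atom A₁) (.atom A₂)).sem I from ⟨h1, h2⟩)
        · exact ⟨ncl b A₂ vx, by simp,
            by simpa [Lit.sat, ncl, Atm.sat, vx, Term.eval, Jint] using h2⟩
      · exact ⟨ncl b A₁ vx, by simp,
          by simpa [Lit.sat, ncl, Atm.sat, vx, Term.eval, Jint] using h1⟩
    · simp only [clausesOf, Set.mem_singleton_iff] at hc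
      subst hc
      intro ρ
      by_cases hR : (ρ 0, ρ 1) ∈ I.role r
      · by_cases hA : ρ 1 ∈ I.conc A
        · refine ⟨pcl b B vx, by simp, ?_⟩
          simp only [Lit.sat, pcl, Atm.sat, vx, Term.eval, if_true]
          exact hM _ hci
            (show ρ 0 ∈ (ELConcept.ex r (.atom A)).sem I from ⟨ρ 1, hR, hA⟩)
        · exact ⟨ncl b A vy, by simp,
            by simpa [Lit.sat, ncl, Atm.sat, vy, Term.eval, Jint] using hA⟩
      · exact ⟨nrl r vx vy, by simp,
          by simpa [Lit.sat, nrl, Atm.sat, vx, vy, Term.eval, Jint] using hR⟩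
    · simp only [clausesOf, Set.mem_insert_iff, Set.mem_singleton_iff] at hc
      rcases hc with rfl | rfl
      · intro ρ
        by_cases h : ρ 0 ∈ I.conc A
        · have hex : ∃ e, (ρ 0, e) ∈ I.role r ∧ e ∈ I.conc B :=
            hM _ hci (show ρ 0 ∈ (ELConcept.atom A).sem I from h)
          refine ⟨prl r vx (.app (b, (.atom A, .ex r (.atom B))) vx), by simp, ?_⟩
          simp only [Lit.sat, prl, Atm.sat, vx, Term.eval, if_true]
          exact (Japp_spec I d b A r B (ρ 0) hex).1
        · exact ⟨ncl b A vx, by simp,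
            by simpa [Lit.sat, ncl, Atm.sat, vx, Term.eval, Jint] using h⟩
      · intro ρ
        by_cases h : ρ 0 ∈ I.conc A
        · have hex : ∃ e, (ρ 0, e) ∈ I.role r ∧ e ∈ I.conc B :=
            hM _ hci (show ρ 0 ∈ (ELConcept.atom A).sem I from h)
          refine ⟨pcl b B (.app (b, (.atom A, .ex r (.atom B))) vx), by simp, ?_⟩
          simp only [Lit.sat, pcl, Atm.sat, vx, Term.eval, if_true]
          exact (Japp_spec I d b A r B (ρ 0) hex).2
        · exact ⟨ncl b A vx, by simp,
            by simpa [Lit.sat, ncl, Atm.sat, vx, Term.eval, Jint] using h⟩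
  · simp only [Set.mem_insert_iff, Set.mem_singleton_iff] at hc
    rcases hc with rfl | rfl
    · exact fun ρ => ⟨pcl false C1 .sk0, by simp,
        by simpa [Lit.sat, pcl, Atm.sat, Term.eval, Jint] using hd1⟩
    · exact fun ρ => ⟨ncl true C2 .sk0, by simp,
        by simpa [Lit.sat, ncl, Atm.sat, Term.eval, Jint] using hd2⟩

lemma notC2_H0 (hNF : NormalForm T) (hno : ¬ Entails T (.atom C1) (.atom C2)) :
    GAtm.conc (true, C2) GTerm.sk0 ∉ H0 T C1 C2 := by
  rw [Entails] at hno
  push_neg at hno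
  obtain ⟨α, I, hM, hsub⟩ := hno
  rw [Set.not_subset] at hsub
  obtain ⟨d, hd1, hd2⟩ := hsub
  intro hmem
  have hJ := Jmodels I d hNF hM hd1 hd2
  have := H0_elim hmem (Jint I d) ⟨d⟩ hJ
  exact hd2 this

end Aux7c

section Aux7d

variable {T : TBox} {C1 C2 : ℕ}

/-- Padded Herbrand interpretation: the minimal Herbrand model extended with an
absorbing extra point `none`. -/
def padI (T : TBox) (C1 C2 : ℕ) : FOInterp (Option GTerm) where
  c0 := some GTerm.sk0
  app f := Option.map (GTerm.app f)
  conc Q := {x | ∃ t, x = some t ∧ GAtm.conc Q t ∈ H0 T C1 C2}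
  role r := {p | ∃ t u, p.1 = some t ∧ p.2 = some u ∧ GAtm.role r t u ∈ H0 T C1 C2}

lemma padI_models (hNF : NormalForm T) (hno : ¬ Entails T (.atom C1) (.atom C2)) :
    CModels (padI T C1 C2) (Translation T C1 C2) := by
  refine genModel hNF (notC2_H0 hNF hno) some (fun a b h => Option.some_injective _ h)
    (padI T C1 C2) rfl (fun f t => rfl) (fun Q x => Iff.rfl) (fun r x y => Iff.rfl)

lemma padI_eval :
    ∀ s : Term, Term.eval (padI T C1 C2) (fun _ => none) s = none ∨
      ∃ t : GTerm, s = t.toTerm ∧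
        Term.eval (padI T C1 C2) (fun _ => none) s = some t
  | .var x => Or.inl rfl
  | .sk0 => Or.inr ⟨.sk0, rfl, rfl⟩
  | .app f s => by
      rcases padI_eval s with h | ⟨t, rfl, h⟩
      · exact Or.inl (by simp only [Term.eval]; rw [h]; rfl)
      · exact Or.inr ⟨.app f t, rfl, by
          simp only [GTerm.toTerm, Term.eval]; rw [h]; rfl⟩

lemma evalG_herb (S : Set GAtm) : ∀ t : GTerm, evalG (herb S) t = t
  | .sk0 => rfl
  | .app f t => by simp only [evalG, evalG_herb S t]; rfl

lemma gsat_herb (S : Set GAtm) (a : GAtm) : gsat (herb S) a ↔ a ∈ S := by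
  cases a <;> (simp only [gsat, evalG_herb]; rfl)

lemma toTerm_vars : ∀ t : GTerm, (t.toTerm).vars = ∅
  | .sk0 => rfl
  | .app f t => by simp [GTerm.toTerm, Term.vars, toTerm_vars t]

lemma gunit_ground (a : GAtm) : ClauseGround (gunit a) := by
  rw [ClauseGround, Set.eq_empty_iff_forall_notMem]
  intro x hx
  obtain ⟨l, hl, hxl⟩ := hx
  rw [gunit, Finset.mem_singleton] at hl
  subst hl
  cases a <;> simp [GAtm.toAtm, Atm.vars, toTerm_vars] at hxl

lemma mem_piPos (hNF : NormalForm T) (hno : ¬ Entails T (.atom C1) (.atom C2))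
    {a : GAtm} (ha : a ∈ H0 T C1 C2) :
    InPIpos Set.univ (Translation T C1 C2) a := by
  have hlitKey : ∀ c' : Clause, CEntails (Translation T C1 C2) c' →
      ClEntails c' (gunit a) → (⟨true, a.toAtm⟩ : Lit) ∈ c' := by
    intro c' hc' hcb
    -- every literal of c' is positive
    have hpos : ∀ l ∈ c', l.pos = true := by
      intro l hl
      by_contra hneg
      have hlf : l.pos = false := by
        simpa using hneg
      have hm : CModels (herb ∅) {c'} := by
        intro c hcmem ρ
        rw [Set.mem_singleton_iff] at hcmem
        subst hcmem
        refine ⟨l, hl, ?_⟩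
        obtain ⟨pos, atm⟩ := l
        simp only at hlf
        subst hlf
        cases atm <;> simp [Lit.sat, Atm.sat, herb]
      have h2 := hcb _ _ hm
      obtain ⟨l', hl', hs'⟩ := h2 (fun _ => GTerm.sk0)
      rw [gunit, Finset.mem_singleton] at hl'
      subst hl'
      have : gsat (herb (∅ : Set GAtm)) a :=
        (sat_toAtm _ _ _).1 (by simpa [Lit.sat] using hs')
      rw [gsat_herb] at this
      exact this
    -- the padded model gives a ground literal in c'
    have hpad := hc' _ _ (padI_models hNF hno)
    obtain ⟨l, hl, hs⟩ := hpad (fun _ => none)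
    obtain ⟨pos, atm⟩ := l
    have hlp : pos = true := hpos _ hl
    subst hlp
    have hsat : Atm.sat (padI T C1 C2) (fun _ => none) atm := by
      simpa [Lit.sat] using hs
    obtain ⟨g, rfl⟩ : ∃ g : GAtm, atm = g.toAtm := by
      cases atm with
      | conc Q s =>
          obtain ⟨t, ht, -⟩ := hsat
          rcases padI_eval s with h | ⟨t', rfl, h⟩
          · rw [h] at ht; cases ht
          · exact ⟨.conc Q t', rfl⟩
      | role r s u =>
          obtain ⟨t, w, ht, hw, -⟩ := hsat
          rcases padI_eval s with h | ⟨t', rfl, h⟩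
          · rw [h] at ht; cases ht
          · rcases padI_eval u with h2 | ⟨u', rfl, h2⟩
            · rw [h2] at hw; cases hw
            · exact ⟨.role r t' u', rfl⟩
    -- the "everything except a" Herbrand model forces g = a
    have hTM : ¬ ClauseSat (herb {x : GAtm | x ≠ a}) c' := by
      intro hcs
      have h2 := hcb _ (herb {x : GAtm | x ≠ a})
        (fun c hcmem => by rw [Set.mem_singleton_iff] at hcmem; subst hcmem; exact hcs)
      obtain ⟨l', hl', hs'⟩ := h2 (fun _ => GTerm.sk0)
      rw [gunit, Finset.mem_singleton] at hl'
      subst hl'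
      have : gsat (herb {x : GAtm | x ≠ a}) a :=
        (sat_toAtm _ _ _).1 (by simpa [Lit.sat] using hs')
      rw [gsat_herb] at this
      exact this rfl
    rw [ClauseSat] at hTM
    push_neg at hTM
    obtain ⟨σ, hσ⟩ := hTM
    have hls := hσ _ hl
    have hga : ¬ gsat (herb {x : GAtm | x ≠ a}) g := by
      rw [← sat_toAtm _ σ]
      simpa [Lit.sat] using hls
    rw [gsat_herb] at hga
    simp only [Set.mem_setOf_eq, not_not] at hga
    subst hga
    exact hl
  refine ⟨⟨ha, ?_⟩, gunit_ground a, ?_, ?_⟩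
  · intro c' hc' hcb
    have hlit := hlitKey c' hc' hcb
    intro α I hI ρ
    have hc := hI _ rfl ρ
    obtain ⟨l', hl', hs'⟩ := hc
    rw [Finset.mem_singleton] at hl'
    subst hl'
    exact ⟨_, hlit, hs'⟩
  · intro l hl
    rw [Finset.mem_singleton] at hl
    subst hl
    rfl
  · intro l hl
    rw [Finset.mem_singleton] at hl
    subst hl
    cases a <;> simp [GAtm.toAtm, Atm.inSig]

lemma piPos_eq (hNF : NormalForm T) (hno : ¬ Entails T (.atom C1) (.atom C2)) :
    piPosAtoms Set.univ (Translation T C1 C2) = H0 T C1 C2 := by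
  ext a
  constructor
  · intro h
    exact h.1.1
  · exact mem_piPos hNF hno

end Aux7d

/-- `PI^{g+}` viewed as a Herbrand interpretation is a universal
Herbrand model of `Φ`. -/
theorem pipos_universal_herbrand_model
    (T : TBox) (C1 C2 : ℕ)
    (hNF : NormalForm T)
    (hno : ¬ Entails T (.atom C1) (.atom C2)) :
    HModels (piPosAtoms Set.univ (Translation T C1 C2)) (Translation T C1 C2) ∧
    ∀ S : Set GAtm, HModels S (Translation T C1 C2) →
      piPosAtoms Set.univ (Translation T C1 C2) ⊆ S := by
  constructor
  · show CModels (herb (piPosAtoms Set.univ (Translation T C1 C2))) (Translation T C1 C2)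
    rw [piPos_eq hNF hno]
    refine genModel hNF (notC2_H0 hNF hno) (fun t => t) (fun a b h => h)
      (herb (H0 T C1 C2)) rfl (fun f t => rfl) (fun Q x => ?_) (fun r x y => ?_)
    · exact ⟨fun h => ⟨x, rfl, h⟩, by rintro ⟨t, rfl, h⟩; exact h⟩
    · exact ⟨fun h => ⟨x, y, rfl, rfl, h⟩, by rintro ⟨t, u, rfl, rfl, h⟩; exact h⟩
  · intro S hS a ha
    have hent : CEntails (Translation T C1 C2) (gunit a) := ha.1.1
    obtain ⟨l, hl, hs⟩ := hent _ _ hS (fun _ => GTerm.sk0)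
    rw [gunit, Finset.mem_singleton] at hl
    subst hl
    have hg : gsat (herb S) a := (sat_toAtm _ _ _).1 (by simpa [Lit.sat] using hs)
    rwa [gsat_herb] at hg


end ELAbd
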